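/- arXiv:1503.03056 — 2 statements merged into one kernel-verified Lean document; each statement's English description precedes it below -/
import Mathlib

section
/- Let $u, v, w \in \mathbb{R}^7$ be orthonormal with $\varphi_0(u,v,w) = 0$, and set $R = \chi(u,v,w)$. Then the span of $\{u \times v, v \times w, w \times u\}$ is orthogonal to the span of $\{u, v, w, R\}$. -/
noncomputable section
open scoped RealInnerProductSpace

abbrev R7 : Type := EuclideanSpace ℝ (Fin 7)

/-- standard basis vector -/
def e (k : Fin 7) : R7 := EuclideanSpace.single k 1

/-- `e^{ijk}(u,v,w)` -/
def tri (i j k : Fin 7) (u v w : R7) : ℝ :=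
  Matrix.det !![u i, u j, u k; v i, v j, v k; w i, w j, w k]

/-- the standard `G₂` 3-form `φ₀` (indices shifted to 0-based) -/
def phi0 (u v w : R7) : ℝ :=
  tri 0 1 2 u v w + tri 0 3 4 u v w + tri 0 5 6 u v w + tri 1 3 5 u v w
    - tri 1 4 6 u v w - tri 2 3 6 u v w - tri 2 4 5 u v w

/-- `e^{ijkl}(u,v,w,z)` -/
def quad (i j k l : Fin 7) (u v w z : R7) : ℝ :=
  Matrix.det !![u i, u j, u k, u l; v i, v j, v k, v l;
    w i, w j, w k, w l; z i, z j, z k, z l]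

/-- the 4-form `⋆φ₀` -/
def starphi0 (u v w z : R7) : ℝ :=
  quad 3 4 5 6 u v w z + quad 1 2 5 6 u v w z + quad 1 2 3 4 u v w z
    + quad 0 2 4 6 u v w z - quad 0 2 3 5 u v w z - quad 0 1 4 5 u v w z
    - quad 0 1 3 6 u v w z

/-- the cross product: `⟪u × v, w⟫ = φ₀(u,v,w)` -/
def cross (u v : R7) : R7 :=
  (WithLp.equiv 2 (Fin 7 → ℝ)).symm fun k => phi0 u v (e k)

/-- the associator `χ`: `⟪χ(u,v,w), z⟫ = ⋆φ₀(u,v,w,z)` -/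
def chi (u v w : R7) : R7 :=
  (WithLp.equiv 2 (Fin 7 → ℝ)).symm fun k => starphi0 u v w (e k)

/-- the coassociator `σ` -/
def sigma (a b c d : R7) : R7 :=
  ⟪b, cross c d⟫ • a + ⟪c, cross a d⟫ • b + ⟪a, cross b d⟫ • c + ⟪b, cross a c⟫ • d

/-- Gram determinant `|u ∧ v ∧ w|²` -/
def gram3 (u v w : R7) : ℝ :=
  Matrix.det !![⟪u,u⟫, ⟪u,v⟫, ⟪u,w⟫; ⟪v,u⟫, ⟪v,v⟫, ⟪v,w⟫; ⟪w,u⟫, ⟪w,v⟫, ⟪w,w⟫]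

/-- Gram determinant `|u ∧ v ∧ w ∧ z|²` -/
def gram4 (u v w z : R7) : ℝ :=
  Matrix.det !![⟪u,u⟫, ⟪u,v⟫, ⟪u,w⟫, ⟪u,z⟫;
    ⟪v,u⟫, ⟪v,v⟫, ⟪v,w⟫, ⟪v,z⟫;
    ⟪w,u⟫, ⟪w,v⟫, ⟪w,w⟫, ⟪w,z⟫;
    ⟪z,u⟫, ⟪z,v⟫, ⟪z,w⟫, ⟪z,z⟫]

/-
The cross product represents `φ₀`, i.e. `⟪a × b, c⟫ = φ₀(a, b, c)`, and `φ₀` is alternating, so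
`a × b` is orthogonal to `a` and `b`, while the pairing of each of `u × v`, `v × w`, `w × u` with
the remaining vector among `u, v, w` is `φ₀(u, v, w) = 0`. Likewise `⟪χ(a, b, c), d⟫ = ⋆φ₀(a, b, c, d)`,
and `⋆φ₀(a, b, c, a × b)` vanishes identically (a polynomial identity in the coordinates), so
`a × b ⟂ χ(a, b, c)`; cyclic invariance of `χ` then handles `v × w` and `w × u`.
-/

lemma e_apply (k l : Fin 7) : e k l = if l = k then 1 else 0 := by
  simp [e, PiLp.single_apply]

lemma tri_eq (i j k : Fin 7) (a b c : R7) :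
    tri i j k a b c = a i * (b j * c k - b k * c j) - a j * (b i * c k - b k * c i)
      + a k * (b i * c j - b j * c i) := by
  rw [tri, Matrix.det_fin_three]
  simp only [Matrix.of_apply, Matrix.cons_val', Matrix.cons_val_zero, Matrix.cons_val_one,
    Matrix.cons_val_two, Matrix.empty_val', Matrix.cons_val_fin_one, Matrix.head_cons,
    Matrix.tail_cons, Matrix.head_fin_const]
  ring

lemma tri_cycle (i j k : Fin 7) (a b c : R7) : tri i j k b c a = tri i j k a b c := by
  simp only [tri_eq]; ring

lemma tri_self_left (i j k : Fin 7) (a b : R7) : tri i j k a b a = 0 := by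
  simp only [tri_eq]; ring

lemma tri_self_right (i j k : Fin 7) (a b : R7) : tri i j k a b b = 0 := by
  simp only [tri_eq]; ring

lemma quad_eq (i j k l : Fin 7) (a b c d : R7) :
    quad i j k l a b c d = -d i * tri j k l a b c + d j * tri i k l a b c
      - d k * tri i j l a b c + d l * tri i j k a b c := by
  rw [quad, Matrix.det_succ_row _ 3]
  simp only [Fin.sum_univ_four, Matrix.det_fin_three, tri_eq, Fin.succAbove, Matrix.submatrix_apply,
    Matrix.of_apply, Matrix.cons_val', Matrix.cons_val, Matrix.cons_val_fin_one, Fin.isValue, Fin.reduceLT,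
    Fin.reduceCastSucc, Fin.reduceSucc, Fin.coe_ofNat_eq_mod, ↓reduceIte]
  ring

lemma phi0_cycle (a b c : R7) : phi0 b c a = phi0 a b c := by
  simp only [phi0, tri_cycle]

lemma phi0_self_left (a b : R7) : phi0 a b a = 0 := by
  simp [phi0, tri_self_left]

lemma phi0_self_right (a b : R7) : phi0 a b b = 0 := by
  simp [phi0, tri_self_right]

lemma inner_cross (a b c : R7) : ⟪cross a b, c⟫ = phi0 a b c := by
  simp only [cross, WithLp.equiv_symm_apply, PiLp.inner_apply, RCLike.inner_apply, conj_trivial,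
    Fin.sum_univ_seven, phi0, tri_eq, e_apply, Fin.reduceEq, ↓reduceIte]
  ring

lemma starphi0_cycle (a b c d : R7) : starphi0 b c a d = starphi0 a b c d := by
  simp only [starphi0, quad_eq, tri_cycle]

lemma inner_chi (a b c d : R7) : ⟪chi a b c, d⟫ = starphi0 a b c d := by
  simp only [chi, WithLp.equiv_symm_apply, PiLp.inner_apply, RCLike.inner_apply, conj_trivial,
    Fin.sum_univ_seven, starphi0, quad_eq, e_apply, Fin.reduceEq, ↓reduceIte]
  ring

lemma chi_cycle (a b c : R7) : chi b c a = chi a b c := by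
  ext k
  simp [chi, starphi0_cycle]

lemma starphi0_cross_self (a b c : R7) : starphi0 a b c (cross a b) = 0 := by
  simp only [starphi0, quad_eq, cross, WithLp.equiv_symm_apply, phi0, tri_eq, e_apply, Fin.reduceEq,
    ↓reduceIte]
  ring

lemma phi0_chi_self (a b c : R7) : phi0 a b (chi a b c) = 0 := by
  rw [← inner_cross, real_inner_comm, inner_chi, starphi0_cross_self]

theorem stmt10_general (u v w : R7)
    (hphi : phi0 u v w = 0) :
    ∀ (i : Fin 3) (j : Fin 4),
      ⟪(![cross u v, cross v w, cross w u]) i, (![u, v, w, chi u v w]) j⟫ = 0 := by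
  have hvwu : phi0 v w (chi u v w) = 0 := chi_cycle u v w ▸ phi0_chi_self v w u
  have hwuv : phi0 w u (chi u v w) = 0 := chi_cycle w u v ▸ phi0_chi_self w u v
  intro i j
  fin_cases i <;> fin_cases j <;>
    simp [inner_cross, phi0_chi_self, phi0_self_left, phi0_self_right, phi0_cycle, hphi, hvwu, hwuv]

theorem stmt10 (u v w : R7) (hu : ‖u‖ = 1) (hv : ‖v‖ = 1) (hw : ‖w‖ = 1)
    (huv : ⟪u, v⟫ = 0) (hvw : ⟪v, w⟫ = 0) (huw : ⟪u, w⟫ = 0)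
    (hphi : phi0 u v w = 0) :
    ∀ (i : Fin 3) (j : Fin 4),
      ⟪(![cross u v, cross v w, cross w u]) i, (![u, v, w, chi u v w]) j⟫ = 0 :=
  stmt10_general u v w hphi
end
end

section
/- Let $u, v, w \in \mathbb{R}^7$ be orthonormal with $\varphi_0(u,v,w) = 0$, and set $R = \chi(u,v,w)$. Then $w \times R$ lies in the span of $u \times v$, $v \times w$, $w \times u$. -/
noncomputable section
open scoped RealInnerProductSpace

lemma triEq (i j k : Fin 7) (u v w : R7) : tri i j k u v w =
    u i*(v j*w k - v k*w j) - u j*(v i*w k - v k*w i) + u k*(v i*w j - v j*w i) := by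
  simp [tri, Matrix.det_fin_three]; ring

lemma castSucc2 : (Fin.castSucc 2 : Fin 4) = 2 := rfl

lemma quadEq (i j k l : Fin 7) (u v w z : R7) : quad i j k l u v w z =
    u i * tri j k l v w z - u j * tri i k l v w z
      + u k * tri i j l v w z - u l * tri i j k v w z := by
  simp [quad, tri, Matrix.det_succ_row_zero, Fin.sum_univ_succ, Matrix.det_fin_three,
    Fin.succAbove, castSucc2]
  norm_num
  ring

lemma eApply (k i : Fin 7) : e k i = if i = k then 1 else 0 :=
  EuclideanSpace.single_apply k 1 i

lemma crossApp0 (u v : R7) : cross u v 0 = u 1*v 2 - u 2*v 1 + u 3*v 4 - u 4*v 3 + u 5*v 6 - u 6*v 5 := by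
  show phi0 u v (e 0) = _
  simp [phi0, triEq, eApply]; ring

lemma crossApp1 (u v : R7) : cross u v 1 = - u 0*v 2 + u 2*v 0 + u 3*v 5 - u 4*v 6 - u 5*v 3 + u 6*v 4 := by
  show phi0 u v (e 1) = _
  simp [phi0, triEq, eApply]; ring

lemma crossApp2 (u v : R7) : cross u v 2 = u 0*v 1 - u 1*v 0 - u 3*v 6 - u 4*v 5 + u 5*v 4 + u 6*v 3 := by
  show phi0 u v (e 2) = _
  simp [phi0, triEq, eApply]; ring

lemma crossApp3 (u v : R7) : cross u v 3 = - u 0*v 4 - u 1*v 5 + u 2*v 6 + u 4*v 0 + u 5*v 1 - u 6*v 2 := by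
  show phi0 u v (e 3) = _
  simp [phi0, triEq, eApply]; ring

lemma crossApp4 (u v : R7) : cross u v 4 = u 0*v 3 + u 1*v 6 + u 2*v 5 - u 3*v 0 - u 5*v 2 - u 6*v 1 := by
  show phi0 u v (e 4) = _
  simp [phi0, triEq, eApply]; ring

lemma crossApp5 (u v : R7) : cross u v 5 = - u 0*v 6 + u 1*v 3 - u 2*v 4 - u 3*v 1 + u 4*v 2 + u 6*v 0 := by
  show phi0 u v (e 5) = _
  simp [phi0, triEq, eApply]; ring

lemma crossApp6 (u v : R7) : cross u v 6 = u 0*v 5 - u 1*v 4 - u 2*v 3 + u 3*v 2 + u 4*v 1 - u 5*v 0 := by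
  show phi0 u v (e 6) = _
  simp [phi0, triEq, eApply]; ring

lemma chiApp0 (u v w : R7) : chi u v w 0 = u 1*v 3*w 6 + u 1*v 4*w 5 - u 1*v 5*w 4 - u 1*v 6*w 3 + u 2*v 3*w 5 - u 2*v 4*w 6 - u 2*v 5*w 3 + u 2*v 6*w 4 - u 3*v 1*w 6 - u 3*v 2*w 5 + u 3*v 5*w 2 + u 3*v 6*w 1 - u 4*v 1*w 5 + u 4*v 2*w 6 + u 4*v 5*w 1 - u 4*v 6*w 2 + u 5*v 1*w 4 + u 5*v 2*w 3 - u 5*v 3*w 2 - u 5*v 4*w 1 + u 6*v 1*w 3 - u 6*v 2*w 4 - u 6*v 3*w 1 + u 6*v 4*w 2 := by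
  show starphi0 u v w (e 0) = _
  simp [starphi0, quadEq, triEq, eApply]; ring

lemma chiApp1 (u v w : R7) : chi u v w 1 = - u 0*v 3*w 6 - u 0*v 4*w 5 + u 0*v 5*w 4 + u 0*v 6*w 3 - u 2*v 3*w 4 + u 2*v 4*w 3 - u 2*v 5*w 6 + u 2*v 6*w 5 + u 3*v 0*w 6 + u 3*v 2*w 4 - u 3*v 4*w 2 - u 3*v 6*w 0 + u 4*v 0*w 5 - u 4*v 2*w 3 + u 4*v 3*w 2 - u 4*v 5*w 0 - u 5*v 0*w 4 + u 5*v 2*w 6 + u 5*v 4*w 0 - u 5*v 6*w 2 - u 6*v 0*w 3 - u 6*v 2*w 5 + u 6*v 3*w 0 + u 6*v 5*w 2 := by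
  show starphi0 u v w (e 1) = _
  simp [starphi0, quadEq, triEq, eApply]; ring

lemma chiApp2 (u v w : R7) : chi u v w 2 = - u 0*v 3*w 5 + u 0*v 4*w 6 + u 0*v 5*w 3 - u 0*v 6*w 4 + u 1*v 3*w 4 - u 1*v 4*w 3 + u 1*v 5*w 6 - u 1*v 6*w 5 + u 3*v 0*w 5 - u 3*v 1*w 4 + u 3*v 4*w 1 - u 3*v 5*w 0 - u 4*v 0*w 6 + u 4*v 1*w 3 - u 4*v 3*w 1 + u 4*v 6*w 0 - u 5*v 0*w 3 - u 5*v 1*w 6 + u 5*v 3*w 0 + u 5*v 6*w 1 + u 6*v 0*w 4 + u 6*v 1*w 5 - u 6*v 4*w 0 - u 6*v 5*w 1 := by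
  show starphi0 u v w (e 2) = _
  simp [starphi0, quadEq, triEq, eApply]; ring

lemma chiApp3 (u v w : R7) : chi u v w 3 = u 0*v 1*w 6 + u 0*v 2*w 5 - u 0*v 5*w 2 - u 0*v 6*w 1 - u 1*v 0*w 6 - u 1*v 2*w 4 + u 1*v 4*w 2 + u 1*v 6*w 0 - u 2*v 0*w 5 + u 2*v 1*w 4 - u 2*v 4*w 1 + u 2*v 5*w 0 - u 4*v 1*w 2 + u 4*v 2*w 1 - u 4*v 5*w 6 + u 4*v 6*w 5 + u 5*v 0*w 2 - u 5*v 2*w 0 + u 5*v 4*w 6 - u 5*v 6*w 4 + u 6*v 0*w 1 - u 6*v 1*w 0 - u 6*v 4*w 5 + u 6*v 5*w 4 := by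
  show starphi0 u v w (e 3) = _
  simp [starphi0, quadEq, triEq, eApply]; ring

lemma chiApp4 (u v w : R7) : chi u v w 4 = u 0*v 1*w 5 - u 0*v 2*w 6 - u 0*v 5*w 1 + u 0*v 6*w 2 - u 1*v 0*w 5 + u 1*v 2*w 3 - u 1*v 3*w 2 + u 1*v 5*w 0 + u 2*v 0*w 6 - u 2*v 1*w 3 + u 2*v 3*w 1 - u 2*v 6*w 0 + u 3*v 1*w 2 - u 3*v 2*w 1 + u 3*v 5*w 6 - u 3*v 6*w 5 + u 5*v 0*w 1 - u 5*v 1*w 0 - u 5*v 3*w 6 + u 5*v 6*w 3 - u 6*v 0*w 2 + u 6*v 2*w 0 + u 6*v 3*w 5 - u 6*v 5*w 3 := by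
  show starphi0 u v w (e 4) = _
  simp [starphi0, quadEq, triEq, eApply]; ring

lemma chiApp5 (u v w : R7) : chi u v w 5 = - u 0*v 1*w 4 - u 0*v 2*w 3 + u 0*v 3*w 2 + u 0*v 4*w 1 + u 1*v 0*w 4 - u 1*v 2*w 6 - u 1*v 4*w 0 + u 1*v 6*w 2 + u 2*v 0*w 3 + u 2*v 1*w 6 - u 2*v 3*w 0 - u 2*v 6*w 1 - u 3*v 0*w 2 + u 3*v 2*w 0 - u 3*v 4*w 6 + u 3*v 6*w 4 - u 4*v 0*w 1 + u 4*v 1*w 0 + u 4*v 3*w 6 - u 4*v 6*w 3 - u 6*v 1*w 2 + u 6*v 2*w 1 - u 6*v 3*w 4 + u 6*v 4*w 3 := by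
  show starphi0 u v w (e 5) = _
  simp [starphi0, quadEq, triEq, eApply]; ring

lemma chiApp6 (u v w : R7) : chi u v w 6 = - u 0*v 1*w 3 + u 0*v 2*w 4 + u 0*v 3*w 1 - u 0*v 4*w 2 + u 1*v 0*w 3 + u 1*v 2*w 5 - u 1*v 3*w 0 - u 1*v 5*w 2 - u 2*v 0*w 4 - u 2*v 1*w 5 + u 2*v 4*w 0 + u 2*v 5*w 1 - u 3*v 0*w 1 + u 3*v 1*w 0 + u 3*v 4*w 5 - u 3*v 5*w 4 + u 4*v 0*w 2 - u 4*v 2*w 0 - u 4*v 3*w 5 + u 4*v 5*w 3 + u 5*v 1*w 2 - u 5*v 2*w 1 + u 5*v 3*w 4 - u 5*v 4*w 3 := by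
  show starphi0 u v w (e 6) = _
  simp [starphi0, quadEq, triEq, eApply]; ring

lemma innerExpand (u v : R7) : ⟪u,v⟫ = u 0*v 0 + u 1*v 1 + u 2*v 2 + u 3*v 3
    + u 4*v 4 + u 5*v 5 + u 6*v 6 := by
  simp [PiLp.inner_apply, Fin.sum_univ_seven]; ring

lemma phi0Expand (u v w : R7) : phi0 u v w =
    cross u v 0 * w 0 + cross u v 1 * w 1 + cross u v 2 * w 2 + cross u v 3 * w 3
    + cross u v 4 * w 4 + cross u v 5 * w 5 + cross u v 6 * w 6 := by
  rw [crossApp0, crossApp1, crossApp2, crossApp3, crossApp4, crossApp5, crossApp6]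
  simp only [phi0, triEq]
  ring

set_option maxHeartbeats 1000000 in
lemma key0 (u v w : R7) : cross w (chi u v w) 0 =
    (⟪u,w⟫ • cross v w + ⟪v,w⟫ • cross w u + ⟪w,w⟫ • cross u v - phi0 u v w • w) 0 := by
  simp only [PiLp.add_apply, PiLp.sub_apply, PiLp.smul_apply, smul_eq_mul,
    innerExpand, phi0Expand,
    crossApp0, crossApp1, crossApp2, crossApp3, crossApp4, crossApp5, crossApp6,
    chiApp0, chiApp1, chiApp2, chiApp3, chiApp4, chiApp5, chiApp6]
  ring

set_option maxHeartbeats 1000000 in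
lemma key1 (u v w : R7) : cross w (chi u v w) 1 =
    (⟪u,w⟫ • cross v w + ⟪v,w⟫ • cross w u + ⟪w,w⟫ • cross u v - phi0 u v w • w) 1 := by
  simp only [PiLp.add_apply, PiLp.sub_apply, PiLp.smul_apply, smul_eq_mul,
    innerExpand, phi0Expand,
    crossApp0, crossApp1, crossApp2, crossApp3, crossApp4, crossApp5, crossApp6,
    chiApp0, chiApp1, chiApp2, chiApp3, chiApp4, chiApp5, chiApp6]
  ring

set_option maxHeartbeats 1000000 in
lemma key2 (u v w : R7) : cross w (chi u v w) 2 =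
    (⟪u,w⟫ • cross v w + ⟪v,w⟫ • cross w u + ⟪w,w⟫ • cross u v - phi0 u v w • w) 2 := by
  simp only [PiLp.add_apply, PiLp.sub_apply, PiLp.smul_apply, smul_eq_mul,
    innerExpand, phi0Expand,
    crossApp0, crossApp1, crossApp2, crossApp3, crossApp4, crossApp5, crossApp6,
    chiApp0, chiApp1, chiApp2, chiApp3, chiApp4, chiApp5, chiApp6]
  ring

set_option maxHeartbeats 1000000 in
lemma key3 (u v w : R7) : cross w (chi u v w) 3 =
    (⟪u,w⟫ • cross v w + ⟪v,w⟫ • cross w u + ⟪w,w⟫ • cross u v - phi0 u v w • w) 3 := by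
  simp only [PiLp.add_apply, PiLp.sub_apply, PiLp.smul_apply, smul_eq_mul,
    innerExpand, phi0Expand,
    crossApp0, crossApp1, crossApp2, crossApp3, crossApp4, crossApp5, crossApp6,
    chiApp0, chiApp1, chiApp2, chiApp3, chiApp4, chiApp5, chiApp6]
  ring

set_option maxHeartbeats 1000000 in
lemma key4 (u v w : R7) : cross w (chi u v w) 4 =
    (⟪u,w⟫ • cross v w + ⟪v,w⟫ • cross w u + ⟪w,w⟫ • cross u v - phi0 u v w • w) 4 := by
  simp only [PiLp.add_apply, PiLp.sub_apply, PiLp.smul_apply, smul_eq_mul,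
    innerExpand, phi0Expand,
    crossApp0, crossApp1, crossApp2, crossApp3, crossApp4, crossApp5, crossApp6,
    chiApp0, chiApp1, chiApp2, chiApp3, chiApp4, chiApp5, chiApp6]
  ring

set_option maxHeartbeats 1000000 in
lemma key5 (u v w : R7) : cross w (chi u v w) 5 =
    (⟪u,w⟫ • cross v w + ⟪v,w⟫ • cross w u + ⟪w,w⟫ • cross u v - phi0 u v w • w) 5 := by
  simp only [PiLp.add_apply, PiLp.sub_apply, PiLp.smul_apply, smul_eq_mul,
    innerExpand, phi0Expand,
    crossApp0, crossApp1, crossApp2, crossApp3, crossApp4, crossApp5, crossApp6,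
    chiApp0, chiApp1, chiApp2, chiApp3, chiApp4, chiApp5, chiApp6]
  ring

set_option maxHeartbeats 1000000 in
lemma key6 (u v w : R7) : cross w (chi u v w) 6 =
    (⟪u,w⟫ • cross v w + ⟪v,w⟫ • cross w u + ⟪w,w⟫ • cross u v - phi0 u v w • w) 6 := by
  simp only [PiLp.add_apply, PiLp.sub_apply, PiLp.smul_apply, smul_eq_mul,
    innerExpand, phi0Expand,
    crossApp0, crossApp1, crossApp2, crossApp3, crossApp4, crossApp5, crossApp6,
    chiApp0, chiApp1, chiApp2, chiApp3, chiApp4, chiApp5, chiApp6]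
  ring

lemma key (u v w : R7) : cross w (chi u v w) =
    ⟪u,w⟫ • cross v w + ⟪v,w⟫ • cross w u + ⟪w,w⟫ • cross u v - phi0 u v w • w := by
  ext i
  fin_cases i
  · exact key0 u v w
  · exact key1 u v w
  · exact key2 u v w
  · exact key3 u v w
  · exact key4 u v w
  · exact key5 u v w
  · exact key6 u v w

theorem stmt11 (u v w : R7) (hu : ‖u‖ = 1) (hv : ‖v‖ = 1) (hw : ‖w‖ = 1)
    (huv : ⟪u, v⟫ = 0) (hvw : ⟪v, w⟫ = 0) (huw : ⟪u, w⟫ = 0)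
    (hphi : phi0 u v w = 0) :
    cross w (chi u v w) ∈
      Submodule.span ℝ ({cross u v, cross v w, cross w u} : Set R7) := by
  have hww : ⟪w, w⟫ = 1 := by
    rw [real_inner_self_eq_norm_sq, hw]; norm_num
  have hk := key u v w
  rw [huw, hvw, hww, hphi] at hk
  simp only [zero_smul, one_smul, zero_add, sub_zero] at hk
  rw [hk]
  exact Submodule.subset_span (by simp)
end
end
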